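/- Necessity of the Diophantine condition (sequence version of Proposition 5.2): let a ∈ ℝ and M the associated function of a Komatsu sequence. Suppose there exists N > 0 such that for every K ∈ ℕ there is (k_K, m_K) ∈ ℤ² with 0 < |k_K + a m_K| < (1/K) exp(−M(N(|k_K| + |m_K|))). Define f_{km} = 1 if (k,m) = (k_K, m_K) for some K (and the above inequality holds), and f_{km} = 0 otherwise, and let u_{km} = f_{km}/(i(k + am)) on the support of f. Then the family (u_{km}) violates every ultradistribution bound: for each fixed N' ≤ N there is no constant C with |u_{k_K m_K}| ≤ C exp(M(N'(|k_K|+|m_K|))) for all K; in particular |u_{k_K m_K}| ≥ K exp(M(N(|k_K|+|m_K|))) for every K. -/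

import Mathlib

/-- The associated function `M(r) = sup_j log (r^j / M_j)` of a positive sequence with
`M_0 = 1` (real-valued). -/
noncomputable def assocFn (M : ℕ → ℝ) (r : ℝ) : ℝ :=
  sSup {x : ℝ | ∃ j : ℕ, x = Real.log (r ^ j / M j)}

/-!
Since `|u_K| = 1 / |k_K + a m_K|`, the lower bound `|u_K| ≥ K exp(M(N r_K))`, with
`r_K = |k_K| + |m_K|`, is the hypothesis read upside down. An ultradistribution bound with
`N' ≤ N` would give `K exp(M(N r_K)) ≤ C exp(M(N' r_K)) ≤ C exp(M(N r_K))`, i.e. `K ≤ C` for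
all `K`. The second inequality is monotonicity of `M`; it is needed only for large `K`, and
there `r_K` is large: the values `k_K + a m_K` are nonzero and tend to `0`, so no pair `(k, m)`
occurs infinitely often.
-/

open Filter Topology

theorem tendsto_cofinite_of_comp_tendsto_nhds {α X Y : Type*} [TopologicalSpace Y] [T1Space Y]
    {l : Filter α} {p : α → X} {g : X → Y} {c : Y} (hlim : Tendsto (g ∘ p) l (𝓝 c))
    (hne : ∀ᶠ x in l, g (p x) ≠ c) : Tendsto p l cofinite := by
  refine le_cofinite_iff_eventually_ne.2 fun q => ?_
  by_cases hq : g q = c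
  · exact eventually_map.2 (hne.mono fun x hx hpq => hx ((congrArg g hpq).trans hq))
  · exact eventually_map.2
      ((hlim.eventually_ne (Ne.symm hq)).mono fun x hx hpq => hx (congrArg g hpq))

theorem tendsto_abs_add_abs_cofinite_atTop :
    Tendsto (fun p : ℤ × ℤ => |(p.1 : ℝ)| + |(p.2 : ℝ)|) cofinite atTop := by
  rw [← cocompact_eq_cofinite]
  refine tendsto_atTop_mono (fun p => ?_) tendsto_norm_cocompact_atTop
  rw [Prod.norm_def, Int.norm_eq_abs, Int.norm_eq_abs]
  exact max_le (le_add_of_nonneg_right (abs_nonneg _)) (le_add_of_nonneg_left (abs_nonneg _))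

theorem tendsto_abs_add_abs_of_tendsto_zero {α : Type*} {l : Filter α} {a : ℝ} {k m : α → ℤ}
    (hne : ∀ᶠ K in l, (k K : ℝ) + a * m K ≠ 0)
    (hlim : Tendsto (fun K => (k K : ℝ) + a * m K) l (𝓝 0)) :
    Tendsto (fun K => |(k K : ℝ)| + |(m K : ℝ)|) l atTop := by
  have hpair : Tendsto (fun K => (k K, m K)) l cofinite :=
    tendsto_cofinite_of_comp_tendsto_nhds (g := fun q : ℤ × ℤ => (q.1 : ℝ) + a * q.2) (c := 0)
      hlim hne
  exact (tendsto_abs_add_abs_cofinite_atTop.comp hpair :)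

section AssocFn

variable {M : ℕ → ℝ}

theorem assocFn_eq_iSup (M : ℕ → ℝ) (r : ℝ) :
    assocFn M r = ⨆ j, Real.log (r ^ j / M j) := by
  rw [assocFn, iSup]
  congr 1
  ext x
  exact exists_congr fun _ => eq_comm

theorem assocFn_nonneg (h0 : M 0 = 1) (r : ℝ) : 0 ≤ assocFn M r := by
  rw [assocFn_eq_iSup]
  by_cases hb : BddAbove (Set.range fun j => Real.log (r ^ j / M j))
  · exact le_ciSup_of_le hb 0 (by simp [h0])
  · rw [Real.iSup_of_not_bddAbove hb]

theorem log_pow_div_le_log_pow_div {c x y : ℝ} (hc : 0 < c) (hx : 0 < x) (hxy : x ≤ y) (j : ℕ) :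
    Real.log (x ^ j / c) ≤ Real.log (y ^ j / c) := by
  gcongr

theorem assocFn_le_assocFn (hpos : ∀ j, 0 < M j) {x y : ℝ} (hx : 0 < x) (hxy : x ≤ y)
    (hb : BddAbove (Set.range fun j => Real.log (y ^ j / M j))) :
    assocFn M x ≤ assocFn M y := by
  rw [assocFn_eq_iSup, assocFn_eq_iSup]
  exact ciSup_mono hb fun j => log_pow_div_le_log_pow_div (hpos j) hx hxy j

theorem assocFn_eq_zero_of_not_bddAbove (hpos : ∀ j, 0 < M j) {x y : ℝ} (hx : 0 < x)
    (hxy : x ≤ y) (hnb : ¬BddAbove (Set.range fun j => Real.log (x ^ j / M j))) :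
    assocFn M y = 0 := by
  rw [assocFn_eq_iSup, Real.iSup_of_not_bddAbove]
  exact fun hb => hnb (hb.range_mono _ fun j => log_pow_div_le_log_pow_div (hpos j) hx hxy j)

/-- `assocFn` is monotone only as long as the supremum is finite; beyond the first radius where
it is infinite the junk value `sSup = 0` takes over, so monotonicity holds only eventually. -/
theorem eventually_assocFn_mul_le {α : Type*} {l : Filter α} {r : α → ℝ}
    (hpos : ∀ j, 0 < M j) (h0 : M 0 = 1) (hr : Tendsto r l atTop) {N' N : ℝ} (hN' : 0 < N')
    (hle : N' ≤ N) : ∀ᶠ x in l, assocFn M (N' * r x) ≤ assocFn M (N * r x) := by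
  by_cases hbdd : ∀ t > 0, BddAbove (Set.range fun j => Real.log (t ^ j / M j))
  · filter_upwards [hr.eventually_gt_atTop 0] with x hx
    have hNx : 0 < N * r x := mul_pos (hN'.trans_le hle) hx
    exact assocFn_le_assocFn hpos (mul_pos hN' hx) (by gcongr) (hbdd _ hNx)
  · push Not at hbdd
    obtain ⟨t, ht, hnb⟩ := hbdd
    filter_upwards [(hr.const_mul_atTop hN').eventually_ge_atTop t] with x hx
    rw [assocFn_eq_zero_of_not_bddAbove hpos ht hx hnb]
    exact assocFn_nonneg h0 _

end AssocFn

theorem mul_exp_le_one_div {K d A : ℝ} (hd : 0 < d) (hK : 0 < K)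
    (hlt : d < 1 / K * Real.exp (-A)) : K * Real.exp A ≤ 1 / d := by
  rw [le_div_iff₀ hd]
  calc K * Real.exp A * d ≤ K * Real.exp A * (1 / K * Real.exp (-A)) := by gcongr
    _ = 1 := by rw [Real.exp_neg]; field_simp

theorem stmt_18_general (Mk : ℕ → ℝ) (hpos : ∀ j, 0 < Mk j) (h0 : Mk 0 = 1)
    (a : ℝ) (N : ℝ)
    (k m : ℕ → ℤ)
    (hsmall : ∀ K : ℕ, 1 ≤ K →
      0 < |(k K : ℝ) + a * m K| ∧
      |(k K : ℝ) + a * m K| <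
        (1 / (K : ℝ)) * Real.exp (-(assocFn Mk (N * (|(k K : ℝ)| + |(m K : ℝ)|)))))
    (u : ℕ → ℂ)
    (hu : ∀ K : ℕ, u K = 1 / (Complex.I * ((k K : ℂ) + (a : ℂ) * (m K : ℂ)))) :
    (∀ K : ℕ, 1 ≤ K →
      (K : ℝ) * Real.exp (assocFn Mk (N * (|(k K : ℝ)| + |(m K : ℝ)|))) ≤
        ‖u K‖) ∧
    (∀ N' : ℝ, 0 < N' → N' ≤ N →
      ¬ ∃ C : ℝ, ∀ K : ℕ, 1 ≤ K →
        ‖u K‖ ≤ C * Real.exp (assocFn Mk (N' * (|(k K : ℝ)| + |(m K : ℝ)|)))) := by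
  have hnorm : ∀ K, ‖u K‖ = 1 / |(k K : ℝ) + a * m K| := fun K => by
    rw [hu K, ← Real.norm_eq_abs, ← Complex.norm_real, norm_div, norm_mul, Complex.norm_I,
      one_mul, norm_one]
    push_cast
    rfl
  have lower : ∀ K : ℕ, 1 ≤ K → (K : ℝ) * Real.exp (assocFn Mk (N * (|(k K : ℝ)| + |(m K : ℝ)|)))
      ≤ ‖u K‖ := fun K hK =>
    hnorm K ▸ mul_exp_le_one_div (hsmall K hK).1 (by positivity) (hsmall K hK).2
  refine ⟨lower, ?_⟩
  rintro N' hN' hle ⟨C, hC⟩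
  have hlim : Tendsto (fun K => (k K : ℝ) + a * m K) atTop (𝓝 0) := by
    refine squeeze_zero_norm' ?_ tendsto_one_div_atTop_nhds_zero_nat
    filter_upwards [eventually_ge_atTop 1] with K hK
    refine (hsmall K hK).2.le.trans (mul_le_of_le_one_right (by positivity) ?_)
    exact Real.exp_le_one_iff.2 (neg_nonpos.2 (assocFn_nonneg h0 _))
  have hr := tendsto_abs_add_abs_of_tendsto_zero
    ((eventually_ge_atTop 1).mono fun K hK => abs_pos.1 (hsmall K hK).1) hlim
  obtain ⟨K, hK, hCK, hmono⟩ := ((eventually_ge_atTop 1).and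
    ((tendsto_natCast_atTop_atTop.eventually_gt_atTop C).and
      (eventually_assocFn_mul_le hpos h0 hr hN' hle))).exists
  have hC0 : 0 ≤ C := nonneg_of_mul_nonneg_left ((norm_nonneg _).trans (hC K hK)) (Real.exp_pos _)
  have hKC : (K : ℝ) * Real.exp (assocFn Mk (N * (|(k K : ℝ)| + |(m K : ℝ)|)))
      ≤ C * Real.exp (assocFn Mk (N * (|(k K : ℝ)| + |(m K : ℝ)|))) :=
    (lower K hK).trans ((hC K hK).trans (by gcongr))
  linarith [le_of_mul_le_mul_right hKC (Real.exp_pos _)]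

theorem stmt_18 (Mk : ℕ → ℝ) (hpos : ∀ j, 0 < Mk j) (h0 : Mk 0 = 1)
    (a : ℝ) (N : ℝ) (hN : 0 < N)
    (k m : ℕ → ℤ)
    (hsmall : ∀ K : ℕ, 1 ≤ K →
      0 < |(k K : ℝ) + a * m K| ∧
      |(k K : ℝ) + a * m K| <
        (1 / (K : ℝ)) * Real.exp (-(assocFn Mk (N * (|(k K : ℝ)| + |(m K : ℝ)|)))))
    (u : ℕ → ℂ)
    (hu : ∀ K : ℕ, u K = 1 / (Complex.I * ((k K : ℂ) + (a : ℂ) * (m K : ℂ)))) :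
    (∀ K : ℕ, 1 ≤ K →
      (K : ℝ) * Real.exp (assocFn Mk (N * (|(k K : ℝ)| + |(m K : ℝ)|))) ≤
        ‖u K‖) ∧
    (∀ N' : ℝ, 0 < N' → N' ≤ N →
      ¬ ∃ C : ℝ, ∀ K : ℕ, 1 ≤ K →
        ‖u K‖ ≤ C * Real.exp (assocFn Mk (N' * (|(k K : ℝ)| + |(m K : ℝ)|)))) :=
  stmt_18_general Mk hpos h0 a N k m hsmall u hu
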